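/- There exist a 3-dimensional density matrix ρ = diag(0, 1/2, 1/2), a 3-dimensional density matrix ρ' = diag(1/6, 1/6, 2/3), a 2-dimensional density matrix σ = diag(2/3, 1/3), and a unitary U (a permutation matrix) on the 6-dimensional tensor product space such that tr₂[U(ρ ⊗ σ)U†] = ρ' and tr₁[U(ρ ⊗ σ)U†] = σ, while the min-entropy satisfies S_∞(ρ') < S_∞(ρ), where S_∞(τ) = −log λ_max(τ) with λ_max the largest eigenvalue. Hence correlating-catalytic state transitions can strictly decrease the Rényi-∞ entropy. -/

import Mathlib

open scoped Kronecker ComplexOrder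
open Matrix

noncomputable section

/-- `ρ` is a density matrix: positive semidefinite with unit trace. -/
def IsDensityMatrix {ι : Type*} [Fintype ι] (ρ : Matrix ι ι ℂ) : Prop :=
  ρ.PosSemidef ∧ ρ.trace = 1

/-- Partial trace over the second tensor factor. -/
def ptrace2 {ι κ : Type*} [Fintype κ] (M : Matrix (ι × κ) (ι × κ) ℂ) : Matrix ι ι ℂ :=
  Matrix.of fun i j => ∑ k, M (i, k) (j, k)

/-- Partial trace over the first tensor factor. -/
def ptrace1 {ι κ : Type*} [Fintype ι] (M : Matrix (ι × κ) (ι × κ) ℂ) : Matrix κ κ ℂ :=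
  Matrix.of fun i j => ∑ k, M (k, i) (k, j)

/-- Dephasing (decoherence) channel in the fixed (standard) orthonormal basis `{|j⟩}`:
`D[σ] = ∑ j ⟨j|σ|j⟩ |j⟩⟨j|`. -/
def deph {ι : Type*} [DecidableEq ι] (M : Matrix ι ι ℂ) : Matrix ι ι ℂ :=
  Matrix.diagonal fun j => M j j

/-- The eigenvalue list of a matrix (junk value `0` if not Hermitian). -/
def eigs {ι : Type*} [Fintype ι] [DecidableEq ι] (ρ : Matrix ι ι ℂ) : ι → ℝ :=
  if h : ρ.IsHermitian then h.eigenvalues else 0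

/-- The spectrum of a matrix, as a multiset of real eigenvalues (with multiplicity). -/
def spectra {ι : Type*} [Fintype ι] [DecidableEq ι] (ρ : Matrix ι ι ℂ) : Multiset ℝ :=
  Finset.univ.val.map (eigs ρ)

/-- von Neumann entropy `S(ρ) = -tr(ρ log ρ)`, i.e. the Shannon entropy
of the eigenvalue list (natural logarithm). -/
def vN {ι : Type*} [Fintype ι] [DecidableEq ι] (ρ : Matrix ι ι ℂ) : ℝ :=
  ∑ i, Real.negMulLog (eigs ρ i)

/-- Maximally mixed state `𝟙_d = (1/d)·I_d`. -/
def mm (d : ℕ) : Matrix (Fin d) (Fin d) ℂ :=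
  (d : ℂ)⁻¹ • (1 : Matrix (Fin d) (Fin d) ℂ)

/-- The permutation matrix of a permutation `e`. -/
def permMat {ι : Type*} [Fintype ι] [DecidableEq ι] (e : Equiv.Perm ι) : Matrix ι ι ℂ :=
  Matrix.of fun i j => if i = e j then 1 else 0

/-- Rényi-∞ (min-)entropy: `S_∞(τ) = -log λ_max(τ)`. -/
def Sinf {ι : Type*} [Fintype ι] [DecidableEq ι] (τ : Matrix ι ι ℂ) : ℝ :=
  - Real.log (⨆ i, eigs τ i)

/-!
All three states are diagonal, so everything reduces to probability vectors: conjugating by a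
permutation matrix permutes the diagonal of `ρ ⊗ σ`, partial traces of a diagonal matrix are the
marginal distributions, and the min-entropy of a diagonal state is `-log` of its largest entry.
The permutation keeps the catalyst's marginal `(2/3, 1/3)` but, by correlating system and catalyst,
piles `2/3` of the mass onto one level of the system, whereas `ρ` has largest eigenvalue `1/2`.
-/

section PermutationMatrix

variable {ι : Type*} [Fintype ι] [DecidableEq ι]

theorem permMat_eq_toMatrix (e : Equiv.Perm ι) : permMat e = e.symm.toPEquiv.toMatrix := by
  ext i j
  simp [permMat, Equiv.eq_symm_apply, eq_comm]

theorem conjTranspose_permMat (e : Equiv.Perm ι) : (permMat e)ᴴ = permMat e.symm := by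
  ext i j
  simp [permMat, Equiv.eq_symm_apply, eq_comm, apply_ite]

theorem permMat_mul_mul_conjTranspose (e : Equiv.Perm ι) (M : Matrix ι ι ℂ) :
    permMat e * M * (permMat e)ᴴ = M.submatrix e.symm e.symm := by
  rw [conjTranspose_permMat, permMat_eq_toMatrix, permMat_eq_toMatrix,
    PEquiv.toMatrix_toPEquiv_mul, PEquiv.mul_toMatrix_toPEquiv]
  rfl

end PermutationMatrix

section PartialTrace

variable {ι κ : Type*} [DecidableEq ι] [DecidableEq κ]

theorem ptrace2_diagonal [Fintype κ] (d : ι × κ → ℂ) :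
    ptrace2 (diagonal d) = diagonal fun i => ∑ k, d (i, k) := by
  ext i j
  by_cases h : i = j <;> simp [ptrace2, diagonal_apply, h]

theorem ptrace1_diagonal [Fintype ι] (d : ι × κ → ℂ) :
    ptrace1 (diagonal d) = diagonal fun k => ∑ i, d (i, k) := by
  ext k l
  by_cases h : k = l <;> simp [ptrace1, diagonal_apply, h]

end PartialTrace

section DiagonalState

variable {ι : Type*} [Fintype ι] [DecidableEq ι]

theorem isDensityMatrix_diagonal {d : ι → ℂ} (h0 : ∀ i, 0 ≤ d i) (h1 : ∑ i, d i = 1) :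
    IsDensityMatrix (diagonal d) :=
  ⟨PosSemidef.diagonal h0, by rw [trace_diagonal, h1]⟩

theorem range_eigs_diagonal_ofReal (d : ι → ℝ) :
    Set.range (eigs (diagonal fun i => (d i : ℂ))) = Set.range d := by
  have hA : (diagonal fun i => (d i : ℂ)).IsHermitian := by
    simp [IsHermitian, diagonal_conjTranspose, Pi.star_def]
  rw [eigs, dif_pos hA]
  refine Complex.ofReal_injective.image_injective ?_
  rw [← Set.range_comp, ← Set.range_comp]
  change Set.range (fun i => (hA.eigenvalues i : ℂ)) = Set.range fun i => (d i : ℂ)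
  rw [← spectrum_diagonal (fun i => (d i : ℂ)), hA.spectrum_eq_image_range, ← Set.range_comp]
  rfl

theorem Sinf_diagonal_ofReal {d : ι → ℝ} (i₀ : ι) (hmax : ∀ i, d i ≤ d i₀) :
    Sinf (diagonal fun i => (d i : ℂ)) = -Real.log (d i₀) := by
  have : Nonempty ι := ⟨i₀⟩
  have hsup : ⨆ i, d i = d i₀ :=
    le_antisymm (ciSup_le hmax) (le_ciSup (Set.finite_range d).bddAbove i₀)
  rw [Sinf, iSup, range_eigs_diagonal_ofReal, ← iSup, hsup]

end DiagonalState

/-- The product of the 3-cycles `(0,0) → (0,1) → (1,1)` and `(1,0) → (2,0) → (2,1)`. It sends the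
weights `1/3, 1/6` of `ρ ⊗ σ` on `(1,0), (1,1)` to `(2,0), (0,0)` and those on `(2,0), (2,1)` to
`(2,1), (1,0)`. -/
def catalyticPerm : Equiv.Perm (Fin 3 × Fin 2) where
  toFun p := ![![(0, 1), (1, 1)], ![(2, 0), (0, 0)], ![(2, 1), (1, 0)]] p.1 p.2
  invFun p := ![![(1, 1), (0, 0)], ![(2, 1), (0, 1)], ![(1, 0), (2, 0)]] p.1 p.2
  left_inv := by decide
  right_inv := by decide

/-- The concrete correlating-catalytic transition
`ρ = diag(0,1/2,1/2) → ρ' = diag(1/6,1/6,2/3)` with catalyst `σ = diag(2/3,1/3)` can be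
implemented by a permutation matrix, and it strictly decreases the Rényi-∞ entropy. -/
theorem stmt12 :
    IsDensityMatrix (Matrix.diagonal ![0, 1/2, 1/2] : Matrix (Fin 3) (Fin 3) ℂ) ∧
    IsDensityMatrix (Matrix.diagonal ![1/6, 1/6, 2/3] : Matrix (Fin 3) (Fin 3) ℂ) ∧
    IsDensityMatrix (Matrix.diagonal ![2/3, 1/3] : Matrix (Fin 2) (Fin 2) ℂ) ∧
    (∃ e : Equiv.Perm (Fin 3 × Fin 2),
      ptrace2 (permMat e *
          ((Matrix.diagonal ![0, 1/2, 1/2] : Matrix (Fin 3) (Fin 3) ℂ) ⊗ₖ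
            (Matrix.diagonal ![2/3, 1/3] : Matrix (Fin 2) (Fin 2) ℂ)) * (permMat e)ᴴ)
        = (Matrix.diagonal ![1/6, 1/6, 2/3] : Matrix (Fin 3) (Fin 3) ℂ) ∧
      ptrace1 (permMat e *
          ((Matrix.diagonal ![0, 1/2, 1/2] : Matrix (Fin 3) (Fin 3) ℂ) ⊗ₖ
            (Matrix.diagonal ![2/3, 1/3] : Matrix (Fin 2) (Fin 2) ℂ)) * (permMat e)ᴴ)
        = (Matrix.diagonal ![2/3, 1/3] : Matrix (Fin 2) (Fin 2) ℂ)) ∧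
    Sinf (Matrix.diagonal ![1/6, 1/6, 2/3] : Matrix (Fin 3) (Fin 3) ℂ)
      < Sinf (Matrix.diagonal ![0, 1/2, 1/2] : Matrix (Fin 3) (Fin 3) ℂ) := by
  refine ⟨isDensityMatrix_diagonal ?_ ?_, isDensityMatrix_diagonal ?_ ?_,
    isDensityMatrix_diagonal ?_ ?_, ⟨catalyticPerm, ?_, ?_⟩, ?_⟩
  iterate 3
    · intro i; fin_cases i <;> norm_num [Complex.le_def]
    · norm_num [Fin.sum_univ_succ]
  · rw [diagonal_kronecker_diagonal, permMat_mul_mul_conjTranspose, submatrix_diagonal_equiv,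
      ptrace2_diagonal]
    congr 1
    funext i
    fin_cases i <;> simp [catalyticPerm, Fin.sum_univ_two] <;> norm_num
  · rw [diagonal_kronecker_diagonal, permMat_mul_mul_conjTranspose, submatrix_diagonal_equiv,
      ptrace1_diagonal]
    congr 1
    funext i
    fin_cases i <;> simp [catalyticPerm, Fin.sum_univ_three] <;> norm_num
  · have hρ : (diagonal ![0, 1/2, 1/2] : Matrix (Fin 3) (Fin 3) ℂ)
        = diagonal fun i => ((![0, 1/2, 1/2] : Fin 3 → ℝ) i : ℂ) := by
      congr 1; funext i; fin_cases i <;> simp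
    have hρ' : (diagonal ![1/6, 1/6, 2/3] : Matrix (Fin 3) (Fin 3) ℂ)
        = diagonal fun i => ((![1/6, 1/6, 2/3] : Fin 3 → ℝ) i : ℂ) := by
      congr 1; funext i; fin_cases i <;> simp
    rw [hρ, hρ', Sinf_diagonal_ofReal 2 ?_, Sinf_diagonal_ofReal 2 ?_]
    · simp only [Matrix.cons_val]
      exact neg_lt_neg (Real.log_lt_log (by norm_num) (by norm_num))
    all_goals intro i; fin_cases i <;> simp only [Matrix.cons_val] <;> norm_num
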